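/- Let λ, μ be real parameters with λ ≠ 0 and μ ≠ λ, and let q : ℝ⁴ → ℝ be a smooth function of (t,x,y,z) with q_x nowhere vanishing, satisfying the modified Martínez Alonso–Shabat equation q_y q_{xz} + λ q_x q_{ty} − (q_z + λ q_t) q_{xy} = 0. If r : ℝ⁴ → ℝ is smooth with r_x nowhere vanishing and satisfies the Bäcklund system r_y = (μ/λ)(q_y/q_x) r_x and r_z = (μ/λ)((q_z + λ q_t)/q_x) r_x − μ r_t, then r satisfies r_y r_{xz} + μ r_x r_{ty} − (r_z + μ r_t) r_{xy} = 0. -/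

import Mathlib

/-- Partial derivative of `f : (Fin n → ℝ) → ℝ` in the `i`-th coordinate direction. -/
noncomputable def pd (n : ℕ) (i : Fin n) (f : (Fin n → ℝ) → ℝ) : (Fin n → ℝ) → ℝ :=
  fun p => fderiv ℝ f p (Pi.single i 1)

lemma pd_smooth {n : ℕ} {f : (Fin n → ℝ) → ℝ} (hf : ContDiff ℝ (⊤ : ℕ∞) f) (i : Fin n) :
    ContDiff ℝ (⊤ : ℕ∞) (pd n i f) :=
  (hf.fderiv_right (by simp)).clm_apply contDiff_const

lemma pd_diff {n : ℕ} {f : (Fin n → ℝ) → ℝ} (hf : ContDiff ℝ (⊤ : ℕ∞) f) (i : Fin n) :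
    Differentiable ℝ (pd n i f) :=
  (pd_smooth hf i).differentiable (by simp)

lemma pd_mul {n : ℕ} {f g : (Fin n → ℝ) → ℝ} (hf : Differentiable ℝ f)
    (hg : Differentiable ℝ g) (i : Fin n) (p : Fin n → ℝ) :
    pd n i (fun x => f x * g x) p = pd n i f p * g p + f p * pd n i g p := by
  unfold pd
  rw [fderiv_fun_mul (hf p) (hg p)]
  simp [mul_comm]
  ring

lemma pd_add {n : ℕ} {f g : (Fin n → ℝ) → ℝ} (hf : Differentiable ℝ f)
    (hg : Differentiable ℝ g) (i : Fin n) (p : Fin n → ℝ) :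
    pd n i (fun x => f x + g x) p = pd n i f p + pd n i g p := by
  unfold pd
  rw [fderiv_fun_add (hf p) (hg p)]
  simp

lemma pd_const_mul {n : ℕ} {f : (Fin n → ℝ) → ℝ} (hf : Differentiable ℝ f)
    (c : ℝ) (i : Fin n) (p : Fin n → ℝ) :
    pd n i (fun x => c * f x) p = c * pd n i f p := by
  unfold pd
  rw [fderiv_const_mul (hf p)]
  simp

lemma pd_comm {n : ℕ} {f : (Fin n → ℝ) → ℝ} (hf : ContDiff ℝ (⊤ : ℕ∞) f) (i j : Fin n)
    (p : Fin n → ℝ) : pd n i (pd n j f) p = pd n j (pd n i f) p := by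
  have hd : Differentiable ℝ f := hf.differentiable (by simp)
  have hfd : ContDiff ℝ (⊤ : ℕ∞) (fderiv ℝ f) := hf.fderiv_right (by simp)
  show pd n i (fun x => fderiv ℝ f x (Pi.single j 1)) p
      = pd n j (fun x => fderiv ℝ f x (Pi.single i 1)) p
  unfold pd
  rw [fderiv_clm_apply ((hfd.differentiable (by simp)) p) (differentiableAt_const _),
    fderiv_clm_apply ((hfd.differentiable (by simp)) p) (differentiableAt_const _)]
  simp
  exact second_derivative_symmetric (fun y => (hd y).hasFDerivAt)
    ((hfd.differentiable (by simp)) p).hasFDerivAt _ _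


/-- 4D coordinates `(t,x,y,z) = (0,1,2,3)`. The Bäcklund transformation
`r_y = (μ/λ)(q_y/q_x) r_x`, `r_z = (μ/λ)((q_z + λ q_t)/q_x) r_x − μ r_t` maps solutions
of the modified Martínez Alonso–Shabat equation with parameter `λ` to solutions with
parameter `μ`. -/
theorem stmt_6 (q r : (Fin 4 → ℝ) → ℝ) (hq : ContDiff ℝ (⊤ : ℕ∞) q) (hr : ContDiff ℝ (⊤ : ℕ∞) r)
    (lam mu : ℝ) (hlam : lam ≠ 0) (hne : mu ≠ lam)
    (hqx : ∀ p, pd 4 1 q p ≠ 0) (hrx : ∀ p, pd 4 1 r p ≠ 0)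
    (hmod : ∀ p, pd 4 2 q p * pd 4 3 (pd 4 1 q) p
        + lam * pd 4 1 q p * pd 4 2 (pd 4 0 q) p
        - (pd 4 3 q p + lam * pd 4 0 q p) * pd 4 2 (pd 4 1 q) p = 0)
    (h1 : ∀ p, pd 4 2 r p = (mu / lam) * (pd 4 2 q p / pd 4 1 q p) * pd 4 1 r p)
    (h2 : ∀ p, pd 4 3 r p
        = (mu / lam) * ((pd 4 3 q p + lam * pd 4 0 q p) / pd 4 1 q p) * pd 4 1 r p
          - mu * pd 4 0 r p) :
    ∀ p, pd 4 2 r p * pd 4 3 (pd 4 1 r) p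
        + mu * pd 4 1 r p * pd 4 2 (pd 4 0 r) p
        - (pd 4 3 r p + mu * pd 4 0 r p) * pd 4 2 (pd 4 1 r) p = 0 := by
  intro p
  have dQ : ∀ i, Differentiable ℝ (pd 4 i q) := pd_diff hq
  have dR : ∀ i, Differentiable ℝ (pd 4 i r) := pd_diff hr
  -- function identity I : lam*(q_x * r_y) = mu*(q_y * r_x)
  have hI : (fun x => lam * (pd 4 1 q x * pd 4 2 r x))
      = (fun x => mu * (pd 4 2 q x * pd 4 1 r x)) := by
    funext x
    rw [h1 x]
    field_simp [hqx x]
  -- function identity II : lam*(q_x*r_z) + lam*mu*(q_x*r_t) = mu*((q_z+lam q_t)*r_x)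
  have hII : (fun x => lam * (pd 4 1 q x * pd 4 3 r x)
        + lam * mu * (pd 4 1 q x * pd 4 0 r x))
      = (fun x => mu * ((pd 4 3 q x + lam * pd 4 0 q x) * pd 4 1 r x)) := by
    funext x
    rw [h2 x]
    field_simp [hqx x]
    ring
  have dQZ : Differentiable ℝ (fun x => pd 4 3 q x + lam * pd 4 0 q x) :=
    (dQ 3).add ((dQ 0).const_mul lam)
  -- derivative of I in direction 1 (x)
  have e1 : lam * (pd 4 1 (pd 4 1 q) p * pd 4 2 r p + pd 4 1 q p * pd 4 1 (pd 4 2 r) p)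
      = mu * (pd 4 1 (pd 4 2 q) p * pd 4 1 r p + pd 4 2 q p * pd 4 1 (pd 4 1 r) p) := by
    have h := congrFun (congrArg (pd 4 1) hI) p
    rwa [pd_const_mul ((dQ 1).fun_mul (dR 2)) lam 1 p, pd_mul (dQ 1) (dR 2),
      pd_const_mul ((dQ 2).fun_mul (dR 1)) mu 1 p, pd_mul (dQ 2) (dR 1)] at h
  -- derivative of I in direction 0 (t)
  have e2 : lam * (pd 4 0 (pd 4 1 q) p * pd 4 2 r p + pd 4 1 q p * pd 4 0 (pd 4 2 r) p)
      = mu * (pd 4 0 (pd 4 2 q) p * pd 4 1 r p + pd 4 2 q p * pd 4 0 (pd 4 1 r) p) := by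
    have h := congrFun (congrArg (pd 4 0) hI) p
    rwa [pd_const_mul ((dQ 1).fun_mul (dR 2)) lam 0 p, pd_mul (dQ 1) (dR 2),
      pd_const_mul ((dQ 2).fun_mul (dR 1)) mu 0 p, pd_mul (dQ 2) (dR 1)] at h
  -- derivative of II in direction 1 (x)
  have e3 : lam * (pd 4 1 (pd 4 1 q) p * pd 4 3 r p + pd 4 1 q p * pd 4 1 (pd 4 3 r) p)
      + lam * mu * (pd 4 1 (pd 4 1 q) p * pd 4 0 r p + pd 4 1 q p * pd 4 1 (pd 4 0 r) p)
      = mu * ((pd 4 1 (pd 4 3 q) p + lam * pd 4 1 (pd 4 0 q) p) * pd 4 1 r p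
          + (pd 4 3 q p + lam * pd 4 0 q p) * pd 4 1 (pd 4 1 r) p) := by
    have h := congrFun (congrArg (pd 4 1) hII) p
    rwa [pd_add (((dQ 1).fun_mul (dR 3)).const_mul lam) (((dQ 1).fun_mul (dR 0)).const_mul (lam * mu)),
      pd_const_mul ((dQ 1).fun_mul (dR 3)) lam 1 p, pd_mul (dQ 1) (dR 3),
      pd_const_mul ((dQ 1).fun_mul (dR 0)) (lam * mu) 1 p, pd_mul (dQ 1) (dR 0),
      pd_const_mul (dQZ.fun_mul (dR 1)) mu 1 p, pd_mul dQZ (dR 1),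
      pd_add (dQ 3) ((dQ 0).const_mul lam), pd_const_mul (dQ 0) lam 1 p] at h
  -- symmetry rewrites
  have sq01 : pd 4 0 (pd 4 1 q) p = pd 4 1 (pd 4 0 q) p := pd_comm hq 0 1 p
  have sr01 : pd 4 0 (pd 4 1 r) p = pd 4 1 (pd 4 0 r) p := pd_comm hr 0 1 p
  rw [sq01, sr01] at e2
  have iI := congrFun hI p
  have iII := congrFun hII p
  have M := hmod p
  rw [pd_comm hq 3 1 p, pd_comm hq 2 0 p, pd_comm hq 2 1 p] at M
  rw [pd_comm hr 3 1 p, pd_comm hr 2 0 p, pd_comm hr 2 1 p]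
  -- cancel the nonzero factor lam^2 * q_x^2
  have hq1 := hqx p
  have key : lam ^ 2 * pd 4 1 q p ^ 2 *
      (pd 4 2 r p * pd 4 1 (pd 4 3 r) p + mu * pd 4 1 r p * pd 4 0 (pd 4 2 r) p
        - (pd 4 3 r p + mu * pd 4 0 r p) * pd 4 1 (pd 4 2 r) p) = 0 := by
    linear_combination (lam * pd 4 1 q p * pd 4 2 r p) * e3
      + (lam * pd 4 1 q p * mu * pd 4 1 r p) * e2
      - (lam * pd 4 1 q p * (pd 4 3 r p + mu * pd 4 0 r p)) * e1
      + (mu * (pd 4 1 r p * pd 4 1 (pd 4 3 q) p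
          + (pd 4 3 q p + lam * pd 4 0 q p) * pd 4 1 (pd 4 1 r) p
          - lam * pd 4 1 q p * pd 4 1 (pd 4 0 r) p)) * iI
      - (mu * (pd 4 1 (pd 4 2 q) p * pd 4 1 r p + pd 4 2 q p * pd 4 1 (pd 4 1 r) p)) * iII
      + (mu ^ 2 * pd 4 1 r p ^ 2) * M
  have hnz : lam ^ 2 * pd 4 1 q p ^ 2 ≠ 0 :=
    mul_ne_zero (pow_ne_zero _ hlam) (pow_ne_zero _ hq1)
  exact (mul_eq_zero.mp key).resolve_left hnz
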